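/- Suppose the unit ball of the source norm is rotund (strictly convex), meaning the unit sphere coincides with the set of extreme points of the unit ball. Then a set K ⊆ ℝ^d is Capra-convex if and only if: K is a cone, K ∪ {0} is closed, and 0 ∈ K ⟺ 0 ∈ cl conv(ρ(K)). -/

import Mathlib

/-!
The Capra conjugate of the indicator of `K` is the support function of `ρ(K)`, so by
Fenchel–Moreau the Capra biconjugate of that indicator is the indicator of
`C = cl conv ρ(K)` evaluated at `ρ(x)`: `K` is Capra-convex iff `K = ρ⁻¹(C)`. Such a set is
a cone, is closed away from `0` because `ρ` is continuous there, and contains `0` iff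
`0 ∈ C`. Conversely, if `x ≠ 0` and `ρ(x) ∈ C`, then `ρ(x)` lies on the unit sphere, so by
rotundity it is an extreme point of the unit ball, hence of `C`. In finite dimension
`C = conv (cl ρ(K))`, whose extreme points lie in `cl ρ(K) ⊆ K ∪ {0}`, and
`x = N x • ρ(x) ∈ K` because `K` is a cone.
-/

open Classical in
noncomputable def radProj {d : ℕ} (N : EuclideanSpace ℝ (Fin d) → ℝ)
    (x : EuclideanSpace ℝ (Fin d)) : EuclideanSpace ℝ (Fin d) :=
  if x = 0 then 0 else (N x)⁻¹ • x

noncomputable def capraConj {d : ℕ} (N : EuclideanSpace ℝ (Fin d) → ℝ)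
    (f : EuclideanSpace ℝ (Fin d) → EReal) (y : EuclideanSpace ℝ (Fin d)) : EReal :=
  ⨆ x : EuclideanSpace ℝ (Fin d), ((inner ℝ (radProj N x) y : ℝ) : EReal) - f x

noncomputable def capraBiconj {d : ℕ} (N : EuclideanSpace ℝ (Fin d) → ℝ)
    (f : EuclideanSpace ℝ (Fin d) → EReal) (x : EuclideanSpace ℝ (Fin d)) : EReal :=
  ⨆ y : EuclideanSpace ℝ (Fin d), ((inner ℝ (radProj N x) y : ℝ) : EReal) - capraConj N f y

open Classical in
noncomputable def ind {d : ℕ} (X : Set (EuclideanSpace ℝ (Fin d)))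
    (x : EuclideanSpace ℝ (Fin d)) : EReal :=
  if x ∈ X then 0 else ⊤

def IsCapraConvex {d : ℕ} (N : EuclideanSpace ℝ (Fin d) → ℝ)
    (X : Set (EuclideanSpace ℝ (Fin d))) : Prop :=
  ind X = capraBiconj N (ind X)

def coneHull {d : ℕ} (A : Set (EuclideanSpace ℝ (Fin d))) : Set (EuclideanSpace ℝ (Fin d)) :=
  {y | ∃ a ∈ A, ∃ l : ℝ, 0 < l ∧ y = l • a}


open Set Bornology
open scoped RealInnerProductSpace

section FiniteDimensionalConvexity

variable {E : Type*} [NormedAddCommGroup E] [NormedSpace ℝ E] [FiniteDimensional ℝ E]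

theorem IsCompact.convexHull {s : Set E} (hs : IsCompact s) :
    IsCompact (_root_.convexHull ℝ s) := by
  -- Carathéodory: every point of the hull is a convex combination of at most `dim E + 1` points
  let F : (k : ℕ) → (Fin k → ℝ) × (Fin k → E) → E := fun k p => ∑ i, p.1 i • p.2 i
  have hF : _root_.convexHull ℝ s = ⋃ k ∈ Finset.range (Module.finrank ℝ E + 2),
      F k '' (stdSimplex ℝ (Fin k) ×ˢ univ.pi fun _ => s) := by
    refine Subset.antisymm (fun x hx => ?_) ?_
    · obtain ⟨ι, _, z, w, hzs, hz, hw0, hw1, rfl⟩ := eq_pos_convex_span_of_mem_convexHull hx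
      have hcard : Fintype.card ι < Module.finrank ℝ E + 2 :=
        Nat.lt_succ_of_le <|
          hz.card_le_finrank_succ.trans (Nat.succ_le_succ (Submodule.finrank_le _))
      let e := (Fintype.equivFin ι).symm
      refine mem_biUnion (Finset.mem_coe.2 (Finset.mem_range.2 hcard)) ⟨(w ∘ e, z ∘ e),
        ⟨⟨fun i => (hw0 _).le, ?_⟩, fun i _ => hzs (mem_range_self _)⟩, ?_⟩
      · simpa only [Function.comp_apply, e.sum_comp] using hw1
      · exact e.sum_comp fun j => w j • z j
    · refine iUnion₂_subset fun k _ => ?_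
      rintro _ ⟨⟨w, z⟩, ⟨⟨hw0, hw1⟩, hz⟩, rfl⟩
      exact (convex_convexHull ℝ s).sum_mem (fun i _ => hw0 i) hw1
        fun i _ => subset_convexHull ℝ s (hz i trivial)
  rw [hF]
  exact (Finset.range _).isCompact_biUnion fun k _ =>
    ((isCompact_stdSimplex ℝ (Fin k)).prod (isCompact_univ_pi fun _ => hs)).image (by fun_prop)

theorem mem_closure_of_mem_extremePoints_of_mem_closure_convexHull {A B : Set E} {u : E}
    (hBconv : Convex ℝ B) (hBclosed : IsClosed B) (hAB : A ⊆ B) (hA : IsBounded A)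
    (hu : u ∈ B.extremePoints ℝ) (huA : u ∈ closure (convexHull ℝ A)) :
    u ∈ closure A := by
  have hsub : convexHull ℝ (closure A) ⊆ B :=
    convexHull_min (closure_minimal hAB hBclosed) hBconv
  have huA' : u ∈ convexHull ℝ (closure A) :=
    closure_minimal (convexHull_mono subset_closure) hA.isCompact_closure.convexHull.isClosed huA
  exact extremePoints_convexHull_subset
    (inter_extremePoints_subset_extremePoints_of_subset hsub ⟨huA', hu⟩)

end FiniteDimensionalConvexity

structure IsNorm {E : Type*} [AddCommGroup E] [Module ℝ E] (N : E → ℝ) : Prop where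
  eq_zero_iff : ∀ x, N x = 0 ↔ x = 0
  smul : ∀ (a : ℝ) (x : E), N (a • x) = |a| * N x
  add_le : ∀ x y, N (x + y) ≤ N x + N y

namespace IsNorm

variable {E : Type*} [NormedAddCommGroup E] [NormedSpace ℝ E] {N : E → ℝ}

def toSeminorm (hN : IsNorm N) : Seminorm ℝ E :=
  Seminorm.of N hN.add_le fun a x => by rw [hN.smul, Real.norm_eq_abs]

@[simp]
theorem coe_toSeminorm (hN : IsNorm N) : ⇑hN.toSeminorm = N :=
  rfl

theorem nonneg (hN : IsNorm N) (x : E) : 0 ≤ N x :=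
  apply_nonneg hN.toSeminorm x

theorem pos (hN : IsNorm N) {x : E} (hx : x ≠ 0) : 0 < N x :=
  (hN.nonneg x).lt_of_ne fun h => hx ((hN.eq_zero_iff x).1 h.symm)

theorem map_zero (hN : IsNorm N) : N 0 = 0 :=
  (hN.eq_zero_iff 0).2 rfl

theorem convex_setOf_le_one (hN : IsNorm N) : Convex ℝ {x | N x ≤ 1} := by
  simpa using hN.toSeminorm.convexOn.convex_le 1

variable [FiniteDimensional ℝ E]

theorem continuous (hN : IsNorm N) : Continuous N :=
  continuousOn_univ.1 (hN.toSeminorm.convexOn.continuousOn isOpen_univ)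

theorem isClosed_setOf_le_one (hN : IsNorm N) : IsClosed {x | N x ≤ 1} :=
  isClosed_le hN.continuous continuous_const

theorem isBounded_setOf_le_one (hN : IsNorm N) : IsBounded {x | N x ≤ 1} := by
  cases subsingleton_or_nontrivial E
  · exact (Set.toFinite _).isBounded
  obtain ⟨m, hm, hmin⟩ := (isCompact_sphere (0 : E) 1).exists_isMinOn
    (NormedSpace.sphere_nonempty.2 zero_le_one) hN.continuous.continuousOn
  have hm0 : 0 < N m := hN.pos (ne_zero_of_mem_unit_sphere ⟨m, hm⟩)
  refine (Metric.isBounded_iff_subset_closedBall 0).2 ⟨(N m)⁻¹, fun x hx => ?_⟩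
  rw [mem_closedBall_zero_iff]
  rcases eq_or_ne x 0 with rfl | hx0
  · simpa using hm0.le
  have hxpos : 0 < ‖x‖ := norm_pos_iff.2 hx0
  have hmx : N m ≤ ‖x‖⁻¹ * N x := by
    simpa [hN.smul, norm_smul, hx0] using hmin (a := ‖x‖⁻¹ • x) (by simp [norm_smul, hx0])
  rw [le_inv_comm₀ hxpos hm0]
  exact hmx.trans (mul_le_of_le_one_right (inv_nonneg.2 hxpos.le) hx)

end IsNorm

section SupportFunction

variable {E : Type*} [NormedAddCommGroup E] [InnerProductSpace ℝ E] {A : Set E} {u : E}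

theorem inner_le_biSup_inner_of_mem_closure_convexHull (hu : u ∈ closure (convexHull ℝ A))
    (y : E) : ((⟪u, y⟫ : ℝ) : EReal) ≤ ⨆ a ∈ A, ((⟪a, y⟫ : ℝ) : EReal) := by
  by_contra! h
  obtain ⟨r, hAr, hru⟩ := EReal.lt_iff_exists_real_btwn.1 h
  have hhalf : closure (convexHull ℝ A) ⊆ {v | ⟪v, y⟫ ≤ r} := by
    refine closure_minimal (convexHull_min (fun a ha => ?_) ?_) ?_
    · exact EReal.coe_le_coe_iff.1
        ((le_biSup (fun a => ((⟪a, y⟫ : ℝ) : EReal)) ha).trans hAr.le)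
    · exact convex_halfSpace_le
        ⟨fun a b => inner_add_left a b y, fun c a => real_inner_smul_left a y c⟩ r
    · exact isClosed_le (continuous_id.inner continuous_const) continuous_const
  exact (EReal.coe_lt_coe_iff.1 hru).not_ge (hhalf hu)

theorem exists_lt_inner_sub_biSup_inner [CompleteSpace E] (hu : u ∉ closure (convexHull ℝ A))
    (r : ℝ) : ∃ y, (r : EReal) <
      ((⟪u, y⟫ : ℝ) : EReal) - ⨆ a ∈ A, ((⟪a, y⟫ : ℝ) : EReal) := by
  obtain ⟨f, c, hfc, hcu⟩ :=
    geometric_hahn_banach_closed_point (convex_convexHull ℝ A).closure isClosed_closure hu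
  set w := (InnerProductSpace.toDual ℝ E).symm f
  have hw (v : E) : ⟪v, w⟫ = f v := by
    rw [real_inner_comm]; exact InnerProductSpace.toDual_symm_apply
  set t := (|r| + 1) / (f u - c)
  have ht : 0 < t := div_pos (by positivity) (sub_pos.2 hcu)
  have hgap : r < t * f u - t * c := by
    rw [← mul_sub, div_mul_cancel₀ _ (sub_pos.2 hcu).ne']
    linarith [le_abs_self r]
  refine ⟨t • w, lt_of_lt_of_le (EReal.coe_lt_coe_iff.2 hgap) ?_⟩
  rw [EReal.coe_sub, inner_smul_right, hw]
  refine EReal.sub_le_sub le_rfl (iSup₂_le fun a ha => ?_)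
  rw [inner_smul_right, hw]
  exact EReal.coe_le_coe_iff.2
    (mul_le_mul_of_nonneg_left (hfc a (subset_closure (subset_convexHull ℝ A ha))).le ht.le)

theorem iSup_inner_sub_biSup_inner_of_mem (hu : u ∈ closure (convexHull ℝ A)) :
    ⨆ y, (((⟪u, y⟫ : ℝ) : EReal) - ⨆ a ∈ A, ((⟪a, y⟫ : ℝ) : EReal)) = 0 := by
  have hA : A.Nonempty := by
    simpa using (closure_nonempty_iff.1 ⟨u, hu⟩)
  refine le_antisymm (iSup_le fun y => ?_) (le_iSup_of_le 0 ?_)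
  · exact EReal.sub_nonpos.2 (inner_le_biSup_inner_of_mem_closure_convexHull hu y)
  · simp [biSup_const hA]

theorem iSup_inner_sub_biSup_inner_of_notMem [CompleteSpace E]
    (hu : u ∉ closure (convexHull ℝ A)) :
    ⨆ y, (((⟪u, y⟫ : ℝ) : EReal) - ⨆ a ∈ A, ((⟪a, y⟫ : ℝ) : EReal)) = ⊤ :=
  (EReal.eq_top_iff_forall_lt _).2 fun r =>
    let ⟨y, hy⟩ := exists_lt_inner_sub_biSup_inner hu r
    lt_iSup_iff.2 ⟨y, hy⟩

end SupportFunction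

section RadialProjection

variable {d : ℕ} {N : EuclideanSpace ℝ (Fin d) → ℝ} {x : EuclideanSpace ℝ (Fin d)}

@[simp]
theorem radProj_zero : radProj N 0 = 0 :=
  if_pos rfl

theorem radProj_of_ne_zero (hx : x ≠ 0) : radProj N x = (N x)⁻¹ • x :=
  if_neg hx

namespace IsNorm

variable (hN : IsNorm N)
include hN

theorem smul_radProj (hx : x ≠ 0) : N x • radProj N x = x := by
  rw [radProj_of_ne_zero hx, smul_smul, mul_inv_cancel₀ (hN.pos hx).ne', one_smul]

theorem radProj_smul_of_pos {l : ℝ} (hl : 0 < l) (x : EuclideanSpace ℝ (Fin d)) :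
    radProj N (l • x) = radProj N x := by
  rcases eq_or_ne x 0 with rfl | hx
  · rw [smul_zero]
  rw [radProj_of_ne_zero (smul_ne_zero hl.ne' hx), radProj_of_ne_zero hx, hN.smul,
    abs_of_pos hl, smul_smul, mul_inv, mul_right_comm, inv_mul_cancel₀ hl.ne', one_mul]

theorem apply_radProj (hx : x ≠ 0) : N (radProj N x) = 1 := by
  rw [radProj_of_ne_zero hx, hN.smul, abs_inv, abs_of_pos (hN.pos hx),
    inv_mul_cancel₀ (hN.pos hx).ne']

theorem apply_radProj_le_one (x : EuclideanSpace ℝ (Fin d)) : N (radProj N x) ≤ 1 := by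
  rcases eq_or_ne x 0 with rfl | hx
  · simp [hN.map_zero]
  · exact (hN.apply_radProj hx).le

theorem continuousAt_radProj (hx : x ≠ 0) : ContinuousAt (radProj N) x :=
  ((hN.continuous.continuousAt.inv₀ (hN.pos hx).ne').smul continuousAt_id).congr <|
    (eventually_ne_nhds hx).mono fun _ hy => (radProj_of_ne_zero hy).symm

end IsNorm

end RadialProjection

section Capra

variable {d : ℕ} (N : EuclideanSpace ℝ (Fin d) → ℝ) (K : Set (EuclideanSpace ℝ (Fin d)))

theorem capraConj_ind (y : EuclideanSpace ℝ (Fin d)) :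
    capraConj N (ind K) y = ⨆ a ∈ radProj N '' K, ((⟪a, y⟫ : ℝ) : EReal) := by
  rw [capraConj, iSup_image]
  refine iSup_congr fun x => ?_
  by_cases hx : x ∈ K <;> simp [ind, hx]

theorem capraBiconj_ind (x : EuclideanSpace ℝ (Fin d)) :
    capraBiconj N (ind K) x = ind (closure (convexHull ℝ (radProj N '' K))) (radProj N x) := by
  simp only [capraBiconj, capraConj_ind]
  by_cases hx : radProj N x ∈ closure (convexHull ℝ (radProj N '' K))
  · rw [iSup_inner_sub_biSup_inner_of_mem hx, ind, if_pos hx]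
  · rw [iSup_inner_sub_biSup_inner_of_notMem hx, ind, if_neg hx]

theorem isCapraConvex_iff :
    IsCapraConvex N K ↔
      ∀ x, x ∈ K ↔ radProj N x ∈ closure (convexHull ℝ (radProj N '' K)) := by
  refine funext_iff.trans (forall_congr' fun x => ?_)
  rw [capraBiconj_ind]
  unfold ind
  split_ifs <;> simp_all

end Capra

section ConeCharacterization

variable {d : ℕ} {N : EuclideanSpace ℝ (Fin d) → ℝ} {K : Set (EuclideanSpace ℝ (Fin d))}

theorem isClosed_union_zero_of_forall_mem_iff (hN : IsNorm N)
    (hK : ∀ x, x ∈ K ↔ radProj N x ∈ closure (convexHull ℝ (radProj N '' K))) :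
    IsClosed (K ∪ {0}) := by
  refine isClosed_of_closure_subset fun x hx => ?_
  rcases eq_or_ne x 0 with rfl | hx0
  · exact Or.inr rfl
  rw [closure_union, closure_singleton] at hx
  have hxK : x ∈ closure K := hx.resolve_right hx0
  exact Or.inl ((hK x).2 <| closure_mono (subset_convexHull ℝ _)
    (mem_closure_image (hN.continuousAt_radProj hx0) hxK))

theorem mem_of_radProj_mem_closure_convexHull (hN : IsNorm N)
    (hrot : ∀ x, N x = 1 → x ∈ Set.extremePoints ℝ {y | N y ≤ 1})
    (hcone : ∀ l : ℝ, 0 < l → ∀ x ∈ K, l • x ∈ K) (hclosed : IsClosed (K ∪ {0}))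
    {x : EuclideanSpace ℝ (Fin d)} (hx : x ≠ 0)
    (hρx : radProj N x ∈ closure (convexHull ℝ (radProj N '' K))) : x ∈ K := by
  have hball : radProj N '' K ⊆ {y | N y ≤ 1} :=
    image_subset_iff.2 fun k _ => hN.apply_radProj_le_one k
  have hρx' : radProj N x ∈ closure (radProj N '' K) :=
    mem_closure_of_mem_extremePoints_of_mem_closure_convexHull hN.convex_setOf_le_one
      hN.isClosed_setOf_le_one hball (hN.isBounded_setOf_le_one.subset hball)
      (hrot _ (hN.apply_radProj hx)) hρx
  have hρK : radProj N '' K ⊆ K ∪ {0} := by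
    rintro _ ⟨k, hk, rfl⟩
    rcases eq_or_ne k 0 with rfl | hk0
    · exact Or.inr radProj_zero
    · exact Or.inl (radProj_of_ne_zero hk0 ▸ hcone _ (inv_pos.2 (hN.pos hk0)) k hk)
  have hρx_ne : radProj N x ≠ 0 := fun h => by
    simpa [h, hN.map_zero] using hN.apply_radProj hx
  have hρxK : radProj N x ∈ K := (closure_minimal hρK hclosed hρx').resolve_right hρx_ne
  simpa only [hN.smul_radProj hx] using hcone _ (hN.pos hx) _ hρxK

end ConeCharacterization

theorem stmt {d : ℕ} (N : EuclideanSpace ℝ (Fin d) → ℝ)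
    (hN0 : ∀ x : EuclideanSpace ℝ (Fin d), N x = 0 ↔ x = 0)
    (hNh : ∀ (a : ℝ) (x : EuclideanSpace ℝ (Fin d)), N (a • x) = |a| * N x)
    (hNt : ∀ x y : EuclideanSpace ℝ (Fin d), N (x + y) ≤ N x + N y)
    (hrot : ∀ x : EuclideanSpace ℝ (Fin d), N x = 1 → x ∈ Set.extremePoints ℝ {y : EuclideanSpace ℝ (Fin d) | N y ≤ 1})
    (K : Set (EuclideanSpace ℝ (Fin d))) :
    IsCapraConvex N K ↔
      ((∀ l : ℝ, 0 < l → ∀ x ∈ K, l • x ∈ K) ∧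
        IsClosed (K ∪ {0}) ∧
        ((0 : EuclideanSpace ℝ (Fin d)) ∈ K ↔ (0 : EuclideanSpace ℝ (Fin d)) ∈ closure (convexHull ℝ (radProj N '' K)))) := by
  have hN : IsNorm N := ⟨hN0, hNh, hNt⟩
  rw [isCapraConvex_iff]
  constructor
  · intro hK
    refine ⟨fun l hl x hx => (hK _).2 (hN.radProj_smul_of_pos hl x ▸ (hK x).1 hx),
      isClosed_union_zero_of_forall_mem_iff hN hK, by simpa using hK 0⟩
  · rintro ⟨hcone, hclosed, h0⟩ x
    refine ⟨fun hx => subset_closure (subset_convexHull ℝ _ (mem_image_of_mem _ hx)),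
      fun hρx => ?_⟩
    rcases eq_or_ne x 0 with rfl | hx
    · exact h0.2 (by simpa using hρx)
    · exact mem_of_radProj_mem_closure_convexHull hN hrot hcone hclosed hx hρx
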